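/- arXiv:2101.05482 — 12 statements merged into one kernel-verified Lean document; each statement's English description precedes it below -/
import Mathlib

section
/- Let X be a real Hilbert space, M ⊆ X a nonempty closed convex set, J : X → ℝ Fréchet differentiable, and suppose the descent condition J(x) − J(x₊) − ⟨∇J(x), x − x₊⟩ ≥ −(L/2)‖x − x₊‖² holds for all x, x₊ ∈ M, where L > 0. If x_k ∈ M, μ_k > 0, and x_{k+1} = P_M(x_k − μ_k ∇J(x_k)), then J(x_k) − J(x_{k+1}) ≥ (1/μ_k − L/2)‖x_{k+1} − x_k‖². -/
/-!
Testing the variational inequality of the projection at `z = x_k` gives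
`‖x_k - x_{k+1}‖² ≤ μ ⟪∇J(x_k), x_k - x_{k+1}⟫`; adding this to the descent condition at
`(x_k, x_{k+1})` yields the claim.
-/

open RealInnerProductSpace

theorem norm_sub_sq_le_mul_inner_of_inner_gradient_step_nonpos
    {X : Type*} [NormedAddCommGroup X] [InnerProductSpace ℝ X] {x y g : X} {μ : ℝ}
    (h : ⟪(x - μ • g) - y, x - y⟫ ≤ 0) :
    ‖x - y‖ ^ 2 ≤ μ * ⟪g, x - y⟫ := by
  have hsplit : (x - μ • g) - y = (x - y) - μ • g := by abel
  rw [hsplit, inner_sub_left, real_inner_smul_left, real_inner_self_eq_norm_sq] at h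
  linarith

theorem projected_gradient_step_descent_general
    {X : Type*} [NormedAddCommGroup X] [InnerProductSpace ℝ X] [CompleteSpace X]
    (M : Set X)
    (J : X → ℝ) (L : ℝ)
    (hLip : ∀ x ∈ M, ∀ xp ∈ M,
      J x - J xp - ⟪gradient J x, x - xp⟫ ≥ -(L / 2) * ‖x - xp‖ ^ 2)
    (xk : X) (hxk : xk ∈ M) (μ : ℝ) (hμ : 0 < μ)
    (x1 : X) (hx1 : x1 ∈ M)
    (hproj : ∀ z ∈ M, ⟪(xk - μ • gradient J xk) - x1, z - x1⟫ ≤ 0) :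
    J xk - J x1 ≥ (1 / μ - L / 2) * ‖x1 - xk‖ ^ 2 := by
  have hstep := norm_sub_sq_le_mul_inner_of_inner_gradient_step_nonpos (hproj xk hxk)
  have hinner : 1 / μ * ‖xk - x1‖ ^ 2 ≤ ⟪gradient J xk, xk - x1⟫ := by
    rwa [one_div_mul_eq_div, div_le_iff₀ hμ, mul_comm]
  have hdesc := hLip xk hxk x1 hx1
  rw [norm_sub_rev x1 xk]
  linarith

/-- Descent of the cost in one projected gradient step, under the Lipschitz-type
condition `J(x) - J(xp) - ⟪∇J(x), x - xp⟫ ≥ -(L/2)‖x - xp‖²` on `M`. -/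
theorem projected_gradient_step_descent
    {X : Type*} [NormedAddCommGroup X] [InnerProductSpace ℝ X] [CompleteSpace X]
    (M : Set X) (hMne : M.Nonempty) (hMcl : IsClosed M) (hMconv : Convex ℝ M)
    (J : X → ℝ) (hJ : Differentiable ℝ J) (L : ℝ) (hL : 0 < L)
    (hLip : ∀ x ∈ M, ∀ xp ∈ M,
      J x - J xp - ⟪gradient J x, x - xp⟫ ≥ -(L / 2) * ‖x - xp‖ ^ 2)
    (xk : X) (hxk : xk ∈ M) (μ : ℝ) (hμ : 0 < μ)
    (x1 : X) (hx1 : x1 ∈ M)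
    (hproj : ∀ z ∈ M, ⟪(xk - μ • gradient J xk) - x1, z - x1⟫ ≤ 0) :
    J xk - J x1 ≥ (1 / μ - L / 2) * ‖x1 - xk‖ ^ 2 :=
  projected_gradient_step_descent_general M J L hLip xk hxk μ hμ x1 hx1 hproj
end

section
/- Let X be a real Hilbert space, M ⊆ X a nonempty closed convex set, J : X → ℝ Fréchet differentiable with J ≥ 0 on M, and suppose J(x) − J(x₊) − ⟨∇J(x), x − x₊⟩ ≥ −(L/2)‖x − x₊‖² for all x, x₊ ∈ M, where L > 0. Let (x_k)_{k≥0} ⊆ M be generated by the projected gradient iteration x_{k+1} = P_M(x_k − μ_k ∇J(x_k)) with stepsizes 0 < μ_k ≤ μ̄ < 2/L. Then ∑_{k=0}^∞ ‖x_{k+1} − x_k‖² ≤ J(x_0) / (1/μ̄ − L/2). -/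
open RealInnerProductSpace

/-!
Testing the projection inequality at `z = x_k` gives `‖x_k - x_{k+1}‖² ≤ μ_k ⟪∇J(x_k), x_k - x_{k+1}⟫`;
together with the one-sided Lipschitz bound this yields the sufficient decrease
`(1/μ̄ - L/2) ‖x_{k+1} - x_k‖² ≤ J(x_k) - J(x_{k+1})`. Summing telescopes to `J(x_0) - J(x_n) ≤ J(x_0)`.
-/

section ProjectedStep

variable {X : Type*} [NormedAddCommGroup X] [InnerProductSpace ℝ X]

theorem norm_sub_sq_le_smul_inner_of_inner_proj_nonpos {x x' g : X} {μ : ℝ}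
    (hproj : ⟪(x - μ • g) - x', x - x'⟫ ≤ 0) :
    ‖x - x'‖ ^ 2 ≤ μ * ⟪g, x - x'⟫ := by
  have hrw : (x - μ • g) - x' = (x - x') - μ • g := by abel
  rw [hrw, inner_sub_left, real_inner_smul_left, real_inner_self_eq_norm_sq] at hproj
  linarith

theorem sufficient_decrease_of_inner_proj_nonpos {J : X → ℝ} {x x' g : X} {L μ μbar : ℝ}
    (hμ : 0 < μ) (hμμbar : μ ≤ μbar)
    (hproj : ⟪(x - μ • g) - x', x - x'⟫ ≤ 0)
    (hdesc : J x - J x' - ⟪g, x - x'⟫ ≥ -(L / 2) * ‖x - x'‖ ^ 2) :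
    (1 / μbar - L / 2) * ‖x' - x‖ ^ 2 ≤ J x - J x' := by
  have hstep := norm_sub_sq_le_smul_inner_of_inner_proj_nonpos hproj
  have hinner : 0 ≤ ⟪g, x - x'⟫ := nonneg_of_mul_nonneg_right
    ((sq_nonneg _).trans hstep) hμ
  have hstep' : ‖x - x'‖ ^ 2 ≤ μbar * ⟪g, x - x'⟫ :=
    hstep.trans (mul_le_mul_of_nonneg_right hμμbar hinner)
  have hquot : 1 / μbar * ‖x - x'‖ ^ 2 ≤ ⟪g, x - x'⟫ := by
    rw [one_div_mul_eq_div, div_le_iff₀' (hμ.trans_le hμμbar)]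
    exact hstep'
  rw [norm_sub_rev]
  linarith

end ProjectedStep

theorem sum_range_le_div_of_mul_le_sub_succ {a f : ℕ → ℝ} {c : ℝ} (hc : 0 < c)
    (hdecr : ∀ k, c * a k ≤ f k - f (k + 1)) (hf : ∀ k, 0 ≤ f k) (n : ℕ) :
    ∑ k ∈ Finset.range n, a k ≤ f 0 / c := by
  have htel : c * ∑ k ∈ Finset.range n, a k ≤ f 0 - f n := by
    rw [← Finset.sum_range_sub' f n, Finset.mul_sum]
    exact Finset.sum_le_sum fun k _ => hdecr k
  rw [le_div_iff₀' hc]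
  linarith [hf n]

theorem one_div_sub_half_pos {μbar L : ℝ} (hμbar : 0 < μbar) (hμbarL : μbar < 2 / L) :
    0 < 1 / μbar - L / 2 := by
  have h := one_div_lt_one_div_of_lt hμbar hμbarL
  rw [one_div_div] at h
  linarith

theorem projected_gradient_square_summability_general
    {X : Type*} [NormedAddCommGroup X] [InnerProductSpace ℝ X] [CompleteSpace X]
    (M : Set X)
    (J : X → ℝ) (hJnonneg : ∀ x ∈ M, 0 ≤ J x)
    (L : ℝ)
    (hLip : ∀ x ∈ M, ∀ xp ∈ M,
      J x - J xp - ⟪gradient J x, x - xp⟫ ≥ -(L / 2) * ‖x - xp‖ ^ 2)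
    (x : ℕ → X) (hxM : ∀ k, x k ∈ M)
    (μ : ℕ → ℝ) (μbar : ℝ) (hμpos : ∀ k, 0 < μ k) (hμbar : ∀ k, μ k ≤ μbar)
    (hμbarL : μbar < 2 / L)
    (hproj : ∀ k, ∀ z ∈ M,
      ⟪(x k - μ k • gradient J (x k)) - x (k + 1), z - x (k + 1)⟫ ≤ 0) :
    Summable (fun k => ‖x (k + 1) - x k‖ ^ 2) ∧
      ∑' k, ‖x (k + 1) - x k‖ ^ 2 ≤ J (x 0) / (1 / μbar - L / 2) := by
  have hc := one_div_sub_half_pos ((hμpos 0).trans_le (hμbar 0)) hμbarL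
  have hdecr : ∀ k, (1 / μbar - L / 2) * ‖x (k + 1) - x k‖ ^ 2 ≤ J (x k) - J (x (k + 1)) :=
    fun k => sufficient_decrease_of_inner_proj_nonpos (hμpos k) (hμbar k)
      (hproj k (x k) (hxM k)) (hLip (x k) (hxM k) (x (k + 1)) (hxM (k + 1)))
  have hpartial := sum_range_le_div_of_mul_le_sub_succ hc hdecr fun k => hJnonneg _ (hxM k)
  have hsummable := summable_of_sum_range_le (fun k => sq_nonneg _) hpartial
  exact ⟨hsummable, hsummable.tsum_le_of_sum_range_le hpartial⟩

/-- Square summability of the steps of the projected gradient method with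
stepsizes `0 < μ_k ≤ μ̄ < 2/L`:
`∑_{k=0}^∞ ‖x_{k+1} - x_k‖² ≤ J(x_0) / (1/μ̄ - L/2)`. -/
theorem projected_gradient_square_summability
    {X : Type*} [NormedAddCommGroup X] [InnerProductSpace ℝ X] [CompleteSpace X]
    (M : Set X) (hMne : M.Nonempty) (hMcl : IsClosed M) (hMconv : Convex ℝ M)
    (J : X → ℝ) (hJ : Differentiable ℝ J) (hJnonneg : ∀ x ∈ M, 0 ≤ J x)
    (L : ℝ) (hL : 0 < L)
    (hLip : ∀ x ∈ M, ∀ xp ∈ M,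
      J x - J xp - ⟪gradient J x, x - xp⟫ ≥ -(L / 2) * ‖x - xp‖ ^ 2)
    (x : ℕ → X) (hxM : ∀ k, x k ∈ M)
    (μ : ℕ → ℝ) (μbar : ℝ) (hμpos : ∀ k, 0 < μ k) (hμbar : ∀ k, μ k ≤ μbar)
    (hμbarL : μbar < 2 / L)
    (hproj : ∀ k, ∀ z ∈ M,
      ⟪(x k - μ k • gradient J (x k)) - x (k + 1), z - x (k + 1)⟫ ≤ 0) :
    Summable (fun k => ‖x (k + 1) - x k‖ ^ 2) ∧
      ∑' k, ‖x (k + 1) - x k‖ ^ 2 ≤ J (x 0) / (1 / μbar - L / 2) :=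
  projected_gradient_square_summability_general M J hJnonneg L hLip x hxM μ μbar hμpos hμbar hμbarL
    hproj
end

section
/- Let X be a real Hilbert space, M ⊆ X a nonempty closed convex set, J : X → ℝ Fréchet differentiable, x† ∈ M, γ > 0, η ≥ 0 and τ > 1/γ. Assume the convexity-type condition ⟨∇J(x) − ∇J(x†), x − x†⟩ ≥ γ‖∇J(x)‖² for all x ∈ M, and the approximate stationarity condition ⟨∇J(x†), x − x†⟩ ≥ −η for all x ∈ M. Let x_k ∈ M satisfy ‖∇J(x_k)‖² ≥ τη, let 0 < μ_k ≤ 2γ − 2/τ, and set x_{k+1} = P_M(x_k − μ_k ∇J(x_k)). Then ‖x_{k+1} − x†‖² − ‖x_k − x†‖² ≤ −μ_k(2γ − μ_k − 2/τ)‖∇J(x_k)‖² ≤ 0. -/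
/-!
The projection `x₁` onto `M` is at least as close as `xₖ - μ ∇J(xₖ)` to every point of `M`,
in particular to `x†`. Expanding the square of the gradient step leaves the term
`-2μ⟪∇J(xₖ), xₖ - x†⟫`, and adding the convexity-type condition to approximate stationarity
bounds `⟪∇J(xₖ), xₖ - x†⟫` below by `γ‖∇J(xₖ)‖² - η`, where `η ≤ ‖∇J(xₖ)‖² / τ` as long as
the discrepancy principle has not stopped the iteration.
-/

open RealInnerProductSpace

section ProjectedStep

variable {X : Type*} [NormedAddCommGroup X] [InnerProductSpace ℝ X]

theorem norm_sub_sq_le_of_inner_sub_nonpos {y p z : X} (h : ⟪y - p, z - p⟫ ≤ 0) :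
    ‖p - z‖ ^ 2 ≤ ‖y - z‖ ^ 2 := by
  have hsplit : y - z = (y - p) + (p - z) := by abel
  have hcross : ⟪y - p, p - z⟫ = -⟪y - p, z - p⟫ := by
    rw [← inner_neg_right, neg_sub]
  rw [hsplit, norm_add_sq_real, hcross]
  nlinarith [sq_nonneg ‖y - p‖]

theorem norm_sub_smul_sub_sq (x g z : X) (μ : ℝ) :
    ‖(x - μ • g) - z‖ ^ 2 = ‖x - z‖ ^ 2 - 2 * μ * ⟪g, x - z⟫ + μ ^ 2 * ‖g‖ ^ 2 := by
  rw [show (x - μ • g) - z = (x - z) - μ • g by abel, norm_sub_sq_real, inner_smul_right,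
    real_inner_comm, norm_smul, mul_pow, Real.norm_eq_abs, sq_abs]
  ring

theorem norm_sub_sq_sub_le_of_projected_step {x g z p : X} {μ c : ℝ} (hμ : 0 ≤ μ)
    (hproj : ⟪(x - μ • g) - p, z - p⟫ ≤ 0) (hdescent : c * ‖g‖ ^ 2 ≤ ⟪g, x - z⟫) :
    ‖p - z‖ ^ 2 - ‖x - z‖ ^ 2 ≤ -μ * (2 * c - μ) * ‖g‖ ^ 2 := by
  have hnonexp := norm_sub_sq_le_of_inner_sub_nonpos hproj
  rw [norm_sub_smul_sub_sq] at hnonexp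
  nlinarith [mul_le_mul_of_nonneg_left hdescent hμ]

end ProjectedStep

theorem projected_gradient_step_error_monotonicity_general
    {X : Type*} [NormedAddCommGroup X] [InnerProductSpace ℝ X] [CompleteSpace X]
    (M : Set X)
    (J : X → ℝ)
    (xdag : X) (hxdag : xdag ∈ M)
    (γ η τ : ℝ) (hγ : 0 < γ) (hτ : 1 / γ < τ)
    (hconvex : ∀ x ∈ M,
      ⟪gradient J x - gradient J xdag, x - xdag⟫ ≥ γ * ‖gradient J x‖ ^ 2)
    (hstat : ∀ x ∈ M, ⟪gradient J xdag, x - xdag⟫ ≥ -η)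
    (xk : X) (hxk : xk ∈ M)
    (hdisc : ‖gradient J xk‖ ^ 2 ≥ τ * η)
    (μ : ℝ) (hμpos : 0 < μ) (hμle : μ ≤ 2 * γ - 2 / τ)
    (x1 : X)
    (hproj : ∀ z ∈ M, ⟪(xk - μ • gradient J xk) - x1, z - x1⟫ ≤ 0) :
    ‖x1 - xdag‖ ^ 2 - ‖xk - xdag‖ ^ 2 ≤
        -μ * (2 * γ - μ - 2 / τ) * ‖gradient J xk‖ ^ 2 ∧
      -μ * (2 * γ - μ - 2 / τ) * ‖gradient J xk‖ ^ 2 ≤ 0 := by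
  set g := gradient J xk
  have hτpos : 0 < τ := lt_trans (by positivity) hτ
  have hηle : η ≤ ‖g‖ ^ 2 / τ := by rw [le_div_iff₀ hτpos]; linarith
  have hdescent : (γ - 1 / τ) * ‖g‖ ^ 2 ≤ ⟪g, xk - xdag⟫ := by
    have hmono := hconvex xk hxk
    rw [inner_sub_left] at hmono
    have : (γ - 1 / τ) * ‖g‖ ^ 2 = γ * ‖g‖ ^ 2 - ‖g‖ ^ 2 / τ := by ring
    linarith [hstat xk hxk]
  have hstep := norm_sub_sq_sub_le_of_projected_step hμpos.le (hproj xdag hxdag) hdescent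
  refine ⟨by convert hstep using 2; ring, ?_⟩
  have : 0 ≤ 2 * γ - μ - 2 / τ := by linarith
  have := mul_nonneg (mul_nonneg hμpos.le this) (sq_nonneg ‖g‖)
  linarith

/-- Monotonicity of the error for one projected gradient step under the
convexity-type condition `⟪∇J(x) - ∇J(x†), x - x†⟫ ≥ γ‖∇J(x)‖²` and
approximate stationarity `⟪∇J(x†), x - x†⟫ ≥ -η` on `M`, before the
discrepancy principle is triggered (`‖∇J(x_k)‖² ≥ τη`). -/
theorem projected_gradient_step_error_monotonicity
    {X : Type*} [NormedAddCommGroup X] [InnerProductSpace ℝ X] [CompleteSpace X]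
    (M : Set X) (hMne : M.Nonempty) (hMcl : IsClosed M) (hMconv : Convex ℝ M)
    (J : X → ℝ) (hJ : Differentiable ℝ J)
    (xdag : X) (hxdag : xdag ∈ M)
    (γ η τ : ℝ) (hγ : 0 < γ) (hη : 0 ≤ η) (hτ : 1 / γ < τ)
    (hconvex : ∀ x ∈ M,
      ⟪gradient J x - gradient J xdag, x - xdag⟫ ≥ γ * ‖gradient J x‖ ^ 2)
    (hstat : ∀ x ∈ M, ⟪gradient J xdag, x - xdag⟫ ≥ -η)
    (xk : X) (hxk : xk ∈ M)
    (hdisc : ‖gradient J xk‖ ^ 2 ≥ τ * η)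
    (μ : ℝ) (hμpos : 0 < μ) (hμle : μ ≤ 2 * γ - 2 / τ)
    (x1 : X) (hx1 : x1 ∈ M)
    (hproj : ∀ z ∈ M, ⟪(xk - μ • gradient J xk) - x1, z - x1⟫ ≤ 0) :
    ‖x1 - xdag‖ ^ 2 - ‖xk - xdag‖ ^ 2 ≤
        -μ * (2 * γ - μ - 2 / τ) * ‖gradient J xk‖ ^ 2 ∧
      -μ * (2 * γ - μ - 2 / τ) * ‖gradient J xk‖ ^ 2 ≤ 0 :=
  projected_gradient_step_error_monotonicity_general M J xdag hxdag γ η τ hγ hτ hconvex hstat xk hxk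
    hdisc μ hμpos hμle x1 hproj
end

section
/- (Opial's lemma, discrete version) Let S be a nonempty subset of a real Hilbert space X and (x_k)_{k∈ℕ} a sequence in X. Assume that (i) for every z ∈ S, the limit lim_{k→∞} ‖x_k − z‖ exists, and (ii) every weak sequential limit point of (x_k) belongs to S. Then (x_k) converges weakly, as k → ∞, to a point of S. -/
/-!
Bounded sequences in a Hilbert space have weakly convergent subsequences (sequential
Banach–Alaoglu in the separable closed span of the sequence, via Riesz). The sequence is
bounded since `‖x k - z‖` converges, so it has a weak cluster point `p ∈ S`. If `q ∈ S` is
another one, then `⟪x k, p - q⟫` converges, because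
`2 ⟪x k, p - q⟫ = ‖x k - q‖² - ‖x k - p‖² - ‖q‖² + ‖p‖²`; evaluating its limit along the two
subsequences gives `⟪p, p - q⟫ = ⟪q, p - q⟫`, i.e. `p = q`. A bounded sequence all of whose
weak cluster points equal `p` converges weakly to `p`.
-/

open RealInnerProductSpace Filter

/-- Weak convergence of a sequence in a real inner product space. -/
def WeakConvSeq {X : Type*} [NormedAddCommGroup X] [InnerProductSpace ℝ X]
    (x : ℕ → X) (p : X) : Prop :=
  ∀ y : X, Tendsto (fun k => ⟪x k, y⟫) atTop (nhds ⟪p, y⟫)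

open TopologicalSpace InnerProductSpace

section

variable {X : Type*} [NormedAddCommGroup X] [InnerProductSpace ℝ X]

theorem exists_norm_le_of_tendsto_norm_sub {E : Type*} [SeminormedAddCommGroup E]
    {x : ℕ → E} {z : E} {l : ℝ} (h : Tendsto (fun k => ‖x k - z‖) atTop (nhds l)) :
    ∃ M, ∀ k, ‖x k‖ ≤ M := by
  obtain ⟨B, hB⟩ := h.bddAbove_range
  refine ⟨‖z‖ + B, fun k => ?_⟩
  have := hB (Set.mem_range_self k)
  linarith [norm_le_norm_add_norm_sub' (x k) z]

theorem WeakConvSeq.inner_eq_of_tendsto {x : ℕ → X} {p y : X} {c : ℝ} {φ : ℕ → ℕ}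
    (hp : WeakConvSeq (x ∘ φ) p) (hφ : Tendsto φ atTop atTop)
    (hc : Tendsto (fun k => ⟪x k, y⟫) atTop (nhds c)) : ⟪p, y⟫ = c :=
  tendsto_nhds_unique (hp y) (hc.comp hφ)

theorem WeakConvSeq.of_forall_subseq {x : ℕ → X} {p : X}
    (h : ∀ φ : ℕ → ℕ, StrictMono φ → ∃ ψ : ℕ → ℕ, WeakConvSeq (x ∘ φ ∘ ψ) p) :
    WeakConvSeq x p := by
  intro y
  refine tendsto_of_subseq_tendsto fun ns hns => ?_
  obtain ⟨θ, -, hθ⟩ := strictMono_subseq_of_tendsto_atTop hns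
  obtain ⟨ψ, hψ⟩ := h (ns ∘ θ) hθ
  exact ⟨θ ∘ ψ, hψ y⟩

theorem WeakConvSeq.coe_submodule {K : Submodule ℝ X} [K.HasOrthogonalProjection]
    {x : ℕ → K} {p : K} (h : WeakConvSeq x p) : WeakConvSeq (fun k => (x k : X)) p := by
  intro y
  simpa using h (K.orthogonalProjectionOnto y)

theorem exists_weakConvSeq_subseq_of_separable [CompleteSpace X] [SeparableSpace X]
    {x : ℕ → X} {M : ℝ} (hx : ∀ k, ‖x k‖ ≤ M) :
    ∃ p, ∃ φ : ℕ → ℕ, StrictMono φ ∧ WeakConvSeq (x ∘ φ) p := by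
  let f : ℕ → WeakDual ℝ X := fun k => StrongDual.toWeakDual (toDual ℝ X (x k))
  have hf : ∀ k, f k ∈ WeakDual.toStrongDual ⁻¹' Metric.closedBall 0 M := fun k => by
    simpa [f] using hx k
  obtain ⟨a, -, φ, hφ, ha⟩ := WeakDual.isSeqCompact_closedBall ℝ X 0 M hf
  refine ⟨(toDual ℝ X).symm a.toStrongDual, φ, hφ, fun y => ?_⟩
  rw [toDual_symm_apply]
  exact ((WeakDual.eval_continuous y).tendsto a).comp ha

theorem exists_weakConvSeq_subseq [CompleteSpace X] {x : ℕ → X} {M : ℝ}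
    (hx : ∀ k, ‖x k‖ ≤ M) : ∃ p, ∃ φ : ℕ → ℕ, StrictMono φ ∧ WeakConvSeq (x ∘ φ) p := by
  let K := (Submodule.span ℝ (Set.range x)).topologicalClosure
  have : SeparableSpace K :=
    ((Set.countable_range x).isSeparable.span.closure).separableSpace
  have hxK : ∀ k, x k ∈ K := fun k =>
    Submodule.le_topologicalClosure _ (Submodule.subset_span (Set.mem_range_self k))
  obtain ⟨p, φ, hφ, hp⟩ :=
    exists_weakConvSeq_subseq_of_separable (x := fun k => (⟨x k, hxK k⟩ : K)) hx
  exact ⟨p, φ, hφ, hp.coe_submodule⟩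

theorem exists_tendsto_inner_sub_of_tendsto_norm_sub {x : ℕ → X} {p q : X} {a b : ℝ}
    (hp : Tendsto (fun k => ‖x k - p‖) atTop (nhds a))
    (hq : Tendsto (fun k => ‖x k - q‖) atTop (nhds b)) :
    ∃ c, Tendsto (fun k => ⟪x k, p - q⟫) atTop (nhds c) := by
  have hinner : ∀ k, ⟪x k, p - q⟫ = ((‖x k - q‖ ^ 2 - ‖x k - p‖ ^ 2) - (‖q‖ ^ 2 - ‖p‖ ^ 2)) / 2 := by
    intro k
    rw [norm_sub_sq_real, norm_sub_sq_real, inner_sub_right]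
    ring
  simp_rw [hinner]
  exact ⟨_, (((hq.pow 2).sub (hp.pow 2)).sub_const _).div_const 2⟩

theorem eq_of_weakConvSeq_subseq_of_tendsto_norm_sub {x : ℕ → X} {p q : X} {a b : ℝ}
    {φ ψ : ℕ → ℕ} (hφ : Tendsto φ atTop atTop) (hψ : Tendsto ψ atTop atTop)
    (hxp : WeakConvSeq (x ∘ φ) p) (hxq : WeakConvSeq (x ∘ ψ) q)
    (hp : Tendsto (fun k => ‖x k - p‖) atTop (nhds a))
    (hq : Tendsto (fun k => ‖x k - q‖) atTop (nhds b)) : p = q := by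
  obtain ⟨c, hc⟩ := exists_tendsto_inner_sub_of_tendsto_norm_sub hp hq
  have h : ⟪p - q, p - q⟫ = 0 := by
    rw [inner_sub_left, hxp.inner_eq_of_tendsto hφ hc, hxq.inner_eq_of_tendsto hψ hc, sub_self]
  exact sub_eq_zero.1 (inner_self_eq_zero.1 h)

end

/-- Opial's lemma, discrete version: if for every `z ∈ S` the limit
`lim_k ‖x_k - z‖` exists and every weak sequential limit point of `(x_k)`
belongs to `S`, then `(x_k)` converges weakly to a point of `S`. -/
theorem opial_discrete
    {X : Type*} [NormedAddCommGroup X] [InnerProductSpace ℝ X] [CompleteSpace X]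
    (S : Set X) (hS : S.Nonempty) (x : ℕ → X)
    (h1 : ∀ z ∈ S, ∃ l : ℝ, Tendsto (fun k => ‖x k - z‖) atTop (nhds l))
    (h2 : ∀ (p : X) (φ : ℕ → ℕ), StrictMono φ → WeakConvSeq (x ∘ φ) p → p ∈ S) :
    ∃ p ∈ S, WeakConvSeq x p := by
  obtain ⟨z, hz⟩ := hS
  obtain ⟨l, hl⟩ := h1 z hz
  obtain ⟨M, hM⟩ := exists_norm_le_of_tendsto_norm_sub hl
  obtain ⟨p, φ, hφ, hxp⟩ := exists_weakConvSeq_subseq hM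
  have hpS := h2 p φ hφ hxp
  obtain ⟨a, ha⟩ := h1 p hpS
  refine ⟨p, hpS, WeakConvSeq.of_forall_subseq fun θ hθ => ?_⟩
  obtain ⟨q, ψ, hψ, hxq⟩ := exists_weakConvSeq_subseq fun k => hM (θ k)
  obtain ⟨b, hb⟩ := h1 q (h2 q (θ ∘ ψ) (hθ.comp hψ) hxq)
  have hqp : q = p := eq_of_weakConvSeq_subseq_of_tendsto_norm_sub
    (hθ.comp hψ).tendsto_atTop hφ.tendsto_atTop hxq hxp hb ha
  exact ⟨ψ, hqp ▸ hxq⟩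
end

section
/- (Opial's lemma, continuous version) Let S be a nonempty subset of a real Hilbert space X and x : [0, ∞) → X a map. Assume that (i) for every z ∈ S, the limit lim_{t→∞} ‖x(t) − z‖ exists, and (ii) every weak sequential limit point of x(t) as t → ∞ (i.e., every weak limit of a sequence x(t_n) with t_n → ∞) belongs to S. Then x(t) converges weakly, as t → ∞, to a point of S. -/
/-!
Since `‖x(t) - z‖` converges for some `z ∈ S`, every sequence `x(t_n)` with `t_n → ∞` is bounded,
so it has weakly convergent subsequences, whose limits lie in `S`. If `p, q ∈ S` are two of them, expanding
`‖x(t) - q‖² - ‖x(t) - p‖² = 2⟪x(t), p - q⟫ + ‖q‖² - ‖p‖²` shows that `⟪x(t), p - q⟫` converges;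
evaluating the limit along the two subsequences gives `⟪p, p - q⟫ = ⟪q, p - q⟫`, i.e. `p = q`.
Hence every sequence `t_n → ∞` has a subsequence along which `x` converges weakly to the same `p`.
-/

open RealInnerProductSpace Filter Topology

section

variable {X ι : Type*} [NormedAddCommGroup X] [InnerProductSpace ℝ X]

/-- Sequential Banach–Alaoglu in the dual of the separable closed span `K` of the sequence,
transported back by the Riesz isomorphism of `K`; inner products against `y ∈ X` only see the
orthogonal projection of `y` onto `K`. -/
theorem exists_weakConvSeq_subseq_of_norm_le [CompleteSpace X] {u : ℕ → X} {C : ℝ}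
    (hC : ∀ n, ‖u n‖ ≤ C) : ∃ p : X, ∃ φ : ℕ → ℕ, StrictMono φ ∧ WeakConvSeq (u ∘ φ) p := by
  set K : Submodule ℝ X := (Submodule.span ℝ (Set.range u)).topologicalClosure
  have : CompleteSpace K := (Submodule.isClosed_topologicalClosure _).completeSpace_coe
  have : TopologicalSpace.SeparableSpace K :=
    ((Set.countable_range u).isSeparable.span.closure.mono
      (Submodule.topologicalClosure_coe _).le).separableSpace
  let v : ℕ → K := fun n =>
    ⟨u n, Submodule.le_topologicalClosure _ (Submodule.subset_span ⟨n, rfl⟩)⟩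
  let w : ℕ → WeakDual ℝ K := fun n =>
    WeakDual.toStrongDual.symm (InnerProductSpace.toDual ℝ K (v n))
  obtain ⟨f, -, φ, hφ, hf⟩ := WeakDual.isSeqCompact_closedBall ℝ K 0 C (x := w)
    (fun n => by simpa [w] using hC n)
  refine ⟨(InnerProductSpace.toDual ℝ K).symm (WeakDual.toStrongDual f), φ, hφ, fun y => ?_⟩
  have hPy := tendsto_iff_forall_eval_tendsto_topDualPairing.mp hf (K.orthogonalProjectionOnto y)
  rw [← Submodule.inner_orthogonalProjectionOnto_eq_of_mem_left,
    InnerProductSpace.toDual_symm_apply]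
  convert hPy using 2 with k
  · exact (Submodule.inner_orthogonalProjectionOnto_eq_of_mem_left (v (φ k)) y).symm
  · rfl

theorem exists_weakConvSeq_subseq_of_tendsto_norm_sub [CompleteSpace X] {l : Filter ι}
    {x : ι → X} {z : X} {a : ℝ} (hz : Tendsto (fun i => ‖x i - z‖) l (𝓝 a))
    {t : ℕ → ι} (ht : Tendsto t atTop l) :
    ∃ p : X, ∃ φ : ℕ → ℕ, StrictMono φ ∧ WeakConvSeq (x ∘ t ∘ φ) p := by
  obtain ⟨B, hB⟩ := (hz.comp ht).bddAbove_range
  exact exists_weakConvSeq_subseq_of_norm_le fun n =>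
    (norm_le_norm_sub_add _ z).trans (add_le_add_left (hB ⟨n, rfl⟩) _)

theorem tendsto_inner_sub_of_tendsto_norm_sub {l : Filter ι} {x : ι → X} {p q : X} {a b : ℝ}
    (hp : Tendsto (fun i => ‖x i - p‖) l (𝓝 a)) (hq : Tendsto (fun i => ‖x i - q‖) l (𝓝 b)) :
    Tendsto (fun i => ⟪x i, p - q⟫) l (𝓝 ((b ^ 2 - a ^ 2 + ‖p‖ ^ 2 - ‖q‖ ^ 2) / 2)) := by
  have hx : ∀ i, ⟪x i, p - q⟫ = (‖x i - q‖ ^ 2 - ‖x i - p‖ ^ 2 + ‖p‖ ^ 2 - ‖q‖ ^ 2) / 2 := by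
    intro i
    rw [norm_sub_sq_real, norm_sub_sq_real, inner_sub_right]
    ring
  simp only [hx]
  exact ((((hq.pow 2).sub (hp.pow 2)).add_const _).sub_const _).div_const 2

theorem eq_of_weakConvSeq_of_tendsto_norm_sub {l : Filter ι} {x : ι → X} {p q : X} {a b : ℝ}
    (hp : Tendsto (fun i => ‖x i - p‖) l (𝓝 a)) (hq : Tendsto (fun i => ‖x i - q‖) l (𝓝 b))
    {s t : ℕ → ι} (hs : Tendsto s atTop l) (ht : Tendsto t atTop l)
    (hps : WeakConvSeq (x ∘ s) p) (hqt : WeakConvSeq (x ∘ t) q) : p = q := by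
  have hlim := tendsto_inner_sub_of_tendsto_norm_sub hp hq
  have hpp : ⟪p, p - q⟫ = _ := tendsto_nhds_unique (hps (p - q)) (hlim.comp hs)
  have hqp : ⟪q, p - q⟫ = _ := tendsto_nhds_unique (hqt (p - q)) (hlim.comp ht)
  have : ⟪p - q, p - q⟫ = 0 := by rw [inner_sub_left, hpp, hqp, sub_self]
  exact sub_eq_zero.mp (inner_self_eq_zero.mp this)

end

/-- Opial's lemma, continuous version: if for every `z ∈ S` the limit
`lim_{t→∞} ‖x(t) - z‖` exists and every weak limit of a sequence `x(t_n)` with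
`t_n → ∞` belongs to `S`, then `x(t)` converges weakly, as `t → ∞`, to a point
of `S`. -/
theorem opial_continuous
    {X : Type*} [NormedAddCommGroup X] [InnerProductSpace ℝ X] [CompleteSpace X]
    (S : Set X) (hS : S.Nonempty) (x : ℝ → X)
    (h1 : ∀ z ∈ S, ∃ l : ℝ, Tendsto (fun t => ‖x t - z‖) atTop (nhds l))
    (h2 : ∀ (p : X) (t : ℕ → ℝ), Tendsto t atTop atTop →
      WeakConvSeq (fun n => x (t n)) p → p ∈ S) :
    ∃ p ∈ S, ∀ y : X, Tendsto (fun t => ⟪x t, y⟫) atTop (nhds ⟪p, y⟫) := by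
  obtain ⟨z₀, hz₀⟩ := hS
  obtain ⟨l₀, hl₀⟩ := h1 z₀ hz₀
  obtain ⟨p, φ, hφ, hp⟩ :=
    exists_weakConvSeq_subseq_of_tendsto_norm_sub hl₀ tendsto_natCast_atTop_atTop
  have hφ' := (tendsto_natCast_atTop_atTop (R := ℝ)).comp hφ.tendsto_atTop
  have hpS := h2 p _ hφ' hp
  obtain ⟨a, ha⟩ := h1 p hpS
  refine ⟨p, hpS, fun y => tendsto_of_subseq_tendsto fun t ht => ?_⟩
  obtain ⟨q, ψ, hψ, hq⟩ := exists_weakConvSeq_subseq_of_tendsto_norm_sub hl₀ ht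
  have hψ' := ht.comp hψ.tendsto_atTop
  obtain ⟨b, hb⟩ := h1 q (h2 q _ hψ' hq)
  obtain rfl : q = p := eq_of_weakConvSeq_of_tendsto_norm_sub hb ha hψ' hφ' hq hp
  exact ⟨ψ, hq y⟩
end

section
/- Let Y be a real Hilbert space and let a, b ∈ Y. Then ‖a − b‖ · ‖b‖ ≤ ((1 + √2)/2)(‖a‖² + ‖b‖²). Consequently, if F maps into Y, y^δ ∈ Y, and J^δ(x) = (1/2)‖F(x) − y^δ‖², then for any two points x, x₊ in the domain of F one has ‖F(x₊) − F(x)‖ · ‖F(x) − y^δ‖ ≤ (1 + √2)(J^δ(x₊) + J^δ(x)). -/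
/- `(1 + √2) / 2` is the largest eigenvalue of the quadratic form `s t + t²`; the gap is
`((1 + √2) s - t)² / (2 (1 + √2))`. -/
lemma mul_add_sq_le_one_add_sqrt_two_div_two_mul (s t : ℝ) :
    s * t + t ^ 2 ≤ (1 + √2) / 2 * (s ^ 2 + t ^ 2) := by
  have hsq : √2 ^ 2 = 2 := Real.sq_sqrt zero_le_two
  nlinarith [sq_nonneg ((1 + √2) * s - t), Real.sqrt_nonneg 2]

lemma norm_sub_mul_norm_le_one_add_sqrt_two_div_two_mul {E : Type*} [SeminormedAddCommGroup E]
    (a b : E) : ‖a - b‖ * ‖b‖ ≤ (1 + √2) / 2 * (‖a‖ ^ 2 + ‖b‖ ^ 2) :=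
  calc ‖a - b‖ * ‖b‖ ≤ (‖a‖ + ‖b‖) * ‖b‖ := by gcongr; exact norm_sub_le a b
    _ = ‖a‖ * ‖b‖ + ‖b‖ ^ 2 := by ring
    _ ≤ (1 + √2) / 2 * (‖a‖ ^ 2 + ‖b‖ ^ 2) := mul_add_sq_le_one_add_sqrt_two_div_two_mul _ _

theorem norm_mul_norm_le_sqrt_two_estimate_general
    {Y : Type*} [NormedAddCommGroup Y]
    {X : Type*} (a b : Y) (F : X → Y) (yδ : Y) (x xp : X) :
    ‖a - b‖ * ‖b‖ ≤ (1 + Real.sqrt 2) / 2 * (‖a‖ ^ 2 + ‖b‖ ^ 2) ∧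
      ‖F xp - F x‖ * ‖F x - yδ‖ ≤
        (1 + Real.sqrt 2) *
          ((1 / 2) * ‖F xp - yδ‖ ^ 2 + (1 / 2) * ‖F x - yδ‖ ^ 2) := by
  refine ⟨norm_sub_mul_norm_le_one_add_sqrt_two_div_two_mul a b, ?_⟩
  have h := norm_sub_mul_norm_le_one_add_sqrt_two_div_two_mul (F xp - yδ) (F x - yδ)
  rw [sub_sub_sub_cancel_right] at h
  linarith

/-- The elementary Hilbert space estimate
`‖a - b‖ ‖b‖ ≤ ((1 + √2)/2)(‖a‖² + ‖b‖²)`, and its consequence for the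
least-squares cost `J^δ(x) = ½‖F(x) - y^δ‖²`:
`‖F(xp) - F(x)‖ ‖F(x) - y^δ‖ ≤ (1 + √2)(J^δ(xp) + J^δ(x))`. -/
theorem norm_mul_norm_le_sqrt_two_estimate
    {Y : Type*} [NormedAddCommGroup Y] [InnerProductSpace ℝ Y]
    {X : Type*} (a b : Y) (F : X → Y) (yδ : Y) (x xp : X) :
    ‖a - b‖ * ‖b‖ ≤ (1 + Real.sqrt 2) / 2 * (‖a‖ ^ 2 + ‖b‖ ^ 2) ∧
      ‖F xp - F x‖ * ‖F x - yδ‖ ≤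
        (1 + Real.sqrt 2) *
          ((1 / 2) * ‖F xp - yδ‖ ^ 2 + (1 / 2) * ‖F x - yδ‖ ^ 2) :=
  norm_mul_norm_le_sqrt_two_estimate_general a b F yδ x xp
end

section
/- Let X, Y be real Hilbert spaces, M̃ ⊆ X, F : X → Y Fréchet differentiable on M̃, y^δ ∈ Y, x† ∈ M̃, c_tc ≥ 0 and κ > 0. Assume the tangential cone condition at x†: |⟨F(x†) − F(x) − F'(x)(x† − x), F(x) − y^δ⟩| ≤ c_tc ‖F(x†) − F(x)‖ · ‖F(x) − y^δ‖ for all x ∈ M̃. Then for every x ∈ M̃: ⟨F'(x)(x − x†), F(x) − y^δ⟩ ≥ (1 − c_tc − κ)‖F(x) − y^δ‖² − ((1 + c_tc)²/(4κ))‖F(x†) − y^δ‖². -/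
/-!
Write `v = F x - yδ`, `d = F x† - yδ` and `j = F'(x)(x - x†)`. The remainder in the tangential
cone condition is `d - v + j`, so `⟪j, v⟫ = ‖v‖² - ⟪d, v⟫ + ⟪d - v + j, v⟫`. Cauchy–Schwarz,
the cone condition and `‖d - v‖ ≤ ‖d‖ + ‖v‖` bound this below by
`(1 - c_tc)‖v‖² - (1 + c_tc)‖d‖‖v‖`, and Young's inequality with weight `κ` splits the mixed term.
-/

open RealInnerProductSpace

lemma mul_mul_le_mul_sq_add_sq_div {κ : ℝ} (hκ : 0 < κ) (c a b : ℝ) :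
    c * a * b ≤ κ * a ^ 2 + c ^ 2 / (4 * κ) * b ^ 2 := by
  have key : κ * a ^ 2 + c ^ 2 / (4 * κ) * b ^ 2 - c * a * b =
      (2 * κ * a - c * b) ^ 2 / (4 * κ) := by
    field_simp
    ring
  have : 0 ≤ (2 * κ * a - c * b) ^ 2 / (4 * κ) := by positivity
  linarith

section InnerProductSpace

variable {E : Type*} [NormedAddCommGroup E] [InnerProductSpace ℝ E]

lemma sub_mul_norm_le_inner_of_abs_inner_le {c : ℝ} (hc : 0 ≤ c) {j v d : E}
    (h : |⟪d - v + j, v⟫| ≤ c * ‖d - v‖ * ‖v‖) :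
    (1 - c) * ‖v‖ ^ 2 - (1 + c) * ‖d‖ * ‖v‖ ≤ ⟪j, v⟫ := by
  have hsplit : ⟪j, v⟫ = ‖v‖ ^ 2 - ⟪d, v⟫ + ⟪d - v + j, v⟫ := by
    rw [inner_add_left, inner_sub_left, real_inner_self_eq_norm_sq]
    ring
  have hdv : ⟪d, v⟫ ≤ ‖d‖ * ‖v‖ := real_inner_le_norm d v
  have hrem : -(c * (‖d‖ + ‖v‖) * ‖v‖) ≤ ⟪d - v + j, v⟫ := by
    have htri : c * ‖d - v‖ * ‖v‖ ≤ c * (‖d‖ + ‖v‖) * ‖v‖ := by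
      gcongr
      exact norm_sub_le d v
    linarith [neg_abs_le ⟪d - v + j, v⟫]
  rw [hsplit]
  nlinarith

lemma sub_mul_sq_le_inner_of_abs_inner_le {c κ : ℝ} (hc : 0 ≤ c) (hκ : 0 < κ) {j v d : E}
    (h : |⟪d - v + j, v⟫| ≤ c * ‖d - v‖ * ‖v‖) :
    (1 - c - κ) * ‖v‖ ^ 2 - (1 + c) ^ 2 / (4 * κ) * ‖d‖ ^ 2 ≤ ⟪j, v⟫ := by
  have hyoung := mul_mul_le_mul_sq_add_sq_div hκ (1 + c) ‖v‖ ‖d‖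
  have := sub_mul_norm_le_inner_of_abs_inner_le hc h
  nlinarith

end InnerProductSpace

theorem tangential_cone_implies_gradient_condition_general
    {X Y : Type*} [NormedAddCommGroup X] [InnerProductSpace ℝ X]
    [NormedAddCommGroup Y] [InnerProductSpace ℝ Y]
    (Mt : Set X) (F : X → Y) (F' : X → X →L[ℝ] Y)
    (yδ : Y) (xdag : X)
    (ctc κ : ℝ) (hctc : 0 ≤ ctc) (hκ : 0 < κ)
    (htcc : ∀ x ∈ Mt,
      |⟪F xdag - F x - F' x (xdag - x), F x - yδ⟫| ≤
        ctc * ‖F xdag - F x‖ * ‖F x - yδ‖) :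
    ∀ x ∈ Mt,
      ⟪F' x (x - xdag), F x - yδ⟫ ≥
        (1 - ctc - κ) * ‖F x - yδ‖ ^ 2 -
          ((1 + ctc) ^ 2 / (4 * κ)) * ‖F xdag - yδ‖ ^ 2 := by
  intro x hx
  have hdiff : F xdag - F x = (F xdag - yδ) - (F x - yδ) := by abel
  have hrem : F xdag - F x - F' x (xdag - x) =
      (F xdag - yδ) - (F x - yδ) + F' x (x - xdag) := by
    rw [← neg_sub x xdag, map_neg]
    abel
  have hcone := htcc x hx
  rw [hrem, hdiff] at hcone
  exact sub_mul_sq_le_inner_of_abs_inner_le hctc hκ hcone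

/-- Consequence of the tangential cone condition at `x†`: for all `x ∈ M̃`,
`⟪F'(x)(x - x†), F(x) - y^δ⟫ ≥ (1 - c_tc - κ)‖F(x) - y^δ‖² - ((1 + c_tc)²/(4κ))‖F(x†) - y^δ‖²`. -/
theorem tangential_cone_implies_gradient_condition
    {X Y : Type*} [NormedAddCommGroup X] [InnerProductSpace ℝ X]
    [NormedAddCommGroup Y] [InnerProductSpace ℝ Y]
    (Mt : Set X) (F : X → Y) (F' : X → X →L[ℝ] Y)
    (hF : ∀ x ∈ Mt, HasFDerivAt F (F' x) x)
    (yδ : Y) (xdag : X) (hxdag : xdag ∈ Mt)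
    (ctc κ : ℝ) (hctc : 0 ≤ ctc) (hκ : 0 < κ)
    (htcc : ∀ x ∈ Mt,
      |⟪F xdag - F x - F' x (xdag - x), F x - yδ⟫| ≤
        ctc * ‖F xdag - F x‖ * ‖F x - yδ‖) :
    ∀ x ∈ Mt,
      ⟪F' x (x - xdag), F x - yδ⟫ ≥
        (1 - ctc - κ) * ‖F x - yδ‖ ^ 2 -
          ((1 + ctc) ^ 2 / (4 * κ)) * ‖F xdag - yδ‖ ^ 2 :=
  tangential_cone_implies_gradient_condition_general Mt F F' yδ xdag ctc κ hctc hκ htcc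
end

section
/- Let X be a real Banach space, M̃ ⊆ X, J : X → ℝ with J ≥ 0 on M̃, let G(x_k) : X → ℝ be linear, H(x_k) : X × X → ℝ bilinear, R : X → ℝ with R ≥ 0 on M̃, α_k > 0, and let x_k, x† ∈ M̃. Assume the nonlinearity condition: there exist constants a > 0, b ≥ 0, c ≥ 0 such that G(x_k)(x₊ − x†) + (1/2)[H(x_k)(x₊ − x_k, x₊ − x_k) − H(x_k)(x_k − x†, x_k − x†)] ≥ a J(x₊) − b J(x_k) − c J(x†) for all x₊ ∈ M̃. If x_{k+1} ∈ M̃ minimizes the functional x ↦ G(x_k)(x − x_k) + (1/2)H(x_k)(x − x_k, x − x_k) + α_k R(x) over M̃, then a J(x_{k+1}) + α_k R(x_{k+1}) ≤ b J(x_k) + c J(x†) + α_k R(x†). -/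
/-!
Compare the minimality of `x1` against the competitor `xdag`: the difference of the quadratic
Newton models at `x1` and at `xdag` is exactly the left-hand side of the nonlinearity condition
at `x1`, so adding the two inequalities gives the estimate.
-/

section NewtonModel

variable {X : Type*} [TopologicalSpace X] [AddCommGroup X] [Module ℝ X]

noncomputable def newtonModel (G : X →L[ℝ] ℝ) (H : X →L[ℝ] X →L[ℝ] ℝ) (xk x : X) : ℝ :=
  G (x - xk) + (1 / 2) * H (x - xk) (x - xk)

lemma newtonModel_sub_newtonModel (G : X →L[ℝ] ℝ) (H : X →L[ℝ] X →L[ℝ] ℝ) (xk x y : X) :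
    newtonModel G H xk x - newtonModel G H xk y =
      G (x - y) + (1 / 2) * (H (x - xk) (x - xk) - H (xk - y) (xk - y)) := by
  have hG : G (x - y) = G (x - xk) - G (y - xk) := by
    rw [← map_sub, sub_sub_sub_cancel_right]
  have hH : H (xk - y) (xk - y) = H (y - xk) (y - xk) := by
    simp only [← neg_sub y xk, map_neg, neg_apply, neg_neg]
  rw [newtonModel, newtonModel, hG, hH]
  ring

end NewtonModel

theorem newton_step_minimality_estimate_general
    {X : Type*} [NormedAddCommGroup X] [NormedSpace ℝ X]
    (Mt : Set X) (J : X → ℝ)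
    (G : X →L[ℝ] ℝ) (H : X →L[ℝ] X →L[ℝ] ℝ)
    (R : X → ℝ)
    (αk : ℝ)
    (xk : X) (xdag : X) (hxdag : xdag ∈ Mt)
    (a b c : ℝ)
    (habc : ∀ xp ∈ Mt,
      G (xp - xdag) +
          (1 / 2) * (H (xp - xk) (xp - xk) - H (xk - xdag) (xk - xdag)) ≥
        a * J xp - b * J xk - c * J xdag)
    (x1 : X) (hx1 : x1 ∈ Mt)
    (hmin : ∀ x ∈ Mt,
      G (x1 - xk) + (1 / 2) * H (x1 - xk) (x1 - xk) + αk * R x1 ≤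
        G (x - xk) + (1 / 2) * H (x - xk) (x - xk) + αk * R x) :
    a * J x1 + αk * R x1 ≤ b * J xk + c * J xdag + αk * R xdag := by
  have hmodel := newtonModel_sub_newtonModel G H xk x1 xdag
  have hmin_dag := hmin xdag hxdag
  have hnonlin := habc x1 hx1
  rw [newtonModel, newtonModel] at hmodel
  linarith

/-- Minimality estimate for one step of the regularized Newton (SQP) method:
if `x_{k+1}` minimizes `x ↦ G(x_k)(x - x_k) + ½H(x_k)(x - x_k)² + α_k R(x)`
over `M̃` and the nonlinearity condition holds, then
`a J(x_{k+1}) + α_k R(x_{k+1}) ≤ b J(x_k) + c J(x†) + α_k R(x†)`. -/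
theorem newton_step_minimality_estimate
    {X : Type*} [NormedAddCommGroup X] [NormedSpace ℝ X]
    (Mt : Set X) (J : X → ℝ) (hJnonneg : ∀ x ∈ Mt, 0 ≤ J x)
    (G : X →L[ℝ] ℝ) (H : X →L[ℝ] X →L[ℝ] ℝ)
    (R : X → ℝ) (hRnonneg : ∀ x ∈ Mt, 0 ≤ R x)
    (αk : ℝ) (hαk : 0 < αk)
    (xk : X) (hxk : xk ∈ Mt) (xdag : X) (hxdag : xdag ∈ Mt)
    (a b c : ℝ) (ha : 0 < a) (hb : 0 ≤ b) (hc : 0 ≤ c)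
    (habc : ∀ xp ∈ Mt,
      G (xp - xdag) +
          (1 / 2) * (H (xp - xk) (xp - xk) - H (xk - xdag) (xk - xdag)) ≥
        a * J xp - b * J xk - c * J xdag)
    (x1 : X) (hx1 : x1 ∈ Mt)
    (hmin : ∀ x ∈ Mt,
      G (x1 - xk) + (1 / 2) * H (x1 - xk) (x1 - xk) + αk * R x1 ≤
        G (x - xk) + (1 / 2) * H (x - xk) (x - xk) + αk * R x) :
    a * J x1 + αk * R x1 ≤ b * J xk + c * J xdag + αk * R xdag :=
  newton_step_minimality_estimate_general Mt J G H R αk xk xdag hxdag a b c habc x1 hx1 hmin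
end

section
/- (Geometric decay of the cost in the a priori regularized Newton method) Let (J_k)_{k≥0} and (R_k)_{k≥0} be sequences of nonnegative real numbers, R† ≥ 0, η ≥ 0, α₀ > 0, a > b ≥ 0, c ≥ 0, and b/a < θ < 1. Assume the recursion J_{k+1} + (α₀/a)θ^k R_{k+1} ≤ (b/a) J_k + (α₀/a)θ^k R† + (c/a)η holds for all k ≥ 0. Then for every k ≥ 0: J_k ≤ (b/a)^k J_0 + (α₀/(aθ − b)) R† θ^k + (c/(a − b)) η. -/
/-! The bound `y k = (b/a)^k J₀ + (α₀/(aθ - b)) R† θ^k + (c/(a - b)) η` solves the recursion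
`y (k+1) = (b/a) y k + (α₀/a) θ^k R† + (c/a) η` exactly, while dropping the nonnegative term
`(α₀/a) θ^k R_{k+1}` shows that `J` is a subsolution of it. Since `b/a ≥ 0`, the recursion is
monotone, so `J k ≤ y k` follows from `J 0 ≤ y 0` by induction. -/

theorem le_of_le_mul_add_of_mul_add_le {α : Type*} [Semiring α] [PartialOrder α]
    [IsOrderedRing α] {x y f : ℕ → α} {q : α} (hq : 0 ≤ q) (h0 : x 0 ≤ y 0)
    (hx : ∀ k, x (k + 1) ≤ q * x k + f k) (hy : ∀ k, q * y k + f k ≤ y (k + 1)) :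
    ∀ k, x k ≤ y k
  | 0 => h0
  | k + 1 => calc
      x (k + 1) ≤ q * x k + f k := hx k
      _ ≤ q * y k + f k := by gcongr; exact le_of_le_mul_add_of_mul_add_le hq h0 hx hy k
      _ ≤ y (k + 1) := hy k

theorem newton_apriori_cost_decay_general
    (J R : ℕ → ℝ) (hR : ∀ k, 0 ≤ R k)
    (Rdag η α₀ a b c θ : ℝ)
    (hRdag : 0 ≤ Rdag) (hη : 0 ≤ η) (hα₀ : 0 < α₀)
    (hb : 0 ≤ b) (hab : b < a) (hc : 0 ≤ c)
    (hθ1 : b / a < θ)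
    (hrec : ∀ k : ℕ,
      J (k + 1) + (α₀ / a) * θ ^ k * R (k + 1) ≤
        (b / a) * J k + (α₀ / a) * θ ^ k * Rdag + (c / a) * η) :
    ∀ k : ℕ,
      J k ≤ (b / a) ^ k * J 0 + (α₀ / (a * θ - b)) * Rdag * θ ^ k +
        (c / (a - b)) * η := by
  have ha : 0 < a := hb.trans_lt hab
  have hθ : 0 < θ := (div_nonneg hb ha.le).trans_lt hθ1
  have hden : 0 < a * θ - b := by
    have := (div_lt_iff₀ ha).mp hθ1
    linarith
  have hgap : 0 < a - b := sub_pos.mpr hab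
  refine le_of_le_mul_add_of_mul_add_le (f := fun k ↦ (α₀ / a) * θ ^ k * Rdag + (c / a) * η)
    (div_nonneg hb ha.le) ?_ (fun k ↦ ?_) (fun k ↦ ?_)
  · have : 0 ≤ (α₀ / (a * θ - b)) * Rdag + (c / (a - b)) * η := by positivity
    simp only [pow_zero, one_mul, mul_one]
    linarith
  · have hdrop : 0 ≤ (α₀ / a) * θ ^ k * R (k + 1) :=
      mul_nonneg (by positivity) (hR (k + 1))
    linarith [hrec k]
  · apply le_of_eq
    rw [pow_succ, pow_succ]
    field_simp [hden.ne', hgap.ne']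
    ring

/-- Geometric decay of the cost in the a priori regularized Newton method:
from the recursion
`J_{k+1} + (α₀/a)θ^k R_{k+1} ≤ (b/a) J_k + (α₀/a)θ^k R† + (c/a)η`
one obtains `J_k ≤ (b/a)^k J_0 + (α₀/(aθ - b)) R† θ^k + (c/(a - b)) η`. -/
theorem newton_apriori_cost_decay
    (J R : ℕ → ℝ) (hJ : ∀ k, 0 ≤ J k) (hR : ∀ k, 0 ≤ R k)
    (Rdag η α₀ a b c θ : ℝ)
    (hRdag : 0 ≤ Rdag) (hη : 0 ≤ η) (hα₀ : 0 < α₀)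
    (hb : 0 ≤ b) (hab : b < a) (hc : 0 ≤ c)
    (hθ1 : b / a < θ) (hθ2 : θ < 1)
    (hrec : ∀ k : ℕ,
      J (k + 1) + (α₀ / a) * θ ^ k * R (k + 1) ≤
        (b / a) * J k + (α₀ / a) * θ ^ k * Rdag + (c / a) * η) :
    ∀ k : ℕ,
      J k ≤ (b / a) ^ k * J 0 + (α₀ / (a * θ - b)) * Rdag * θ ^ k +
        (c / (a - b)) * η :=
  newton_apriori_cost_decay_general J R hR Rdag η α₀ a b c θ hRdag hη hα₀ hb hab hc hθ1 hrec
end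

section
/- (Uniform bound on the regularization functional in the a priori regularized Newton method) Let (J_k)_{k≥0} and (R_k)_{k≥0} be sequences of nonnegative real numbers, R† ≥ 0, η ≥ 0, α₀ > 0, a > b ≥ 0, c ≥ 0, b/a < θ < 1, and τ > c/(a − b). Assume the recursion J_{k+1} + (α₀/a)θ^k R_{k+1} ≤ (b/a) J_k + (α₀/a)θ^k R† + (c/a)η holds for all k ≥ 0, and let k ≥ 0 be an index with τη ≤ J_k. Then R_{k+1} ≤ R† + ((a − b)/(τ(a − b) − c)) · ((τb + c)/α₀) · ((b/(aθ))^k J_0 + (α₀/(aθ − b)) R†), and in particular R_{k+1} ≤ (1 + ((a − b)/(τ(a − b) − c)) · ((τb + c)/(aθ − b))) R† + ((a − b)/(τ(a − b) − c)) · ((τb + c)/α₀) · J_0. -/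
/-!
Discarding the nonnegative term `(α₀/a) θ^n R_{n+1}` turns the recursion into a linear
recursion for `J` with a geometric forcing term, which unrolls to
`J_k ≤ θ^k ((b/(aθ))^k J_0 + α₀/(aθ - b) R†) + c η/(a - b)`.
As long as the discrepancy principle has not stopped the iteration, `η ≤ J_k/τ`, so the noise
term can be absorbed into `J_k`. Discarding `J_{k+1} ≥ 0` instead bounds
`α₀ θ^k (R_{k+1} - R†)` by `(b + c/τ) J_k`, and the factor `θ^k` cancels against the one
in the bound on `J_k`.
-/

theorem le_geom_of_le_mul_add {x : ℕ → ℝ} {q θ A B : ℝ} (hq : 0 ≤ q) (hqθ : q < θ)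
    (hq1 : q < 1) (hA : 0 ≤ A) (hB : 0 ≤ B)
    (hx : ∀ n, x (n + 1) ≤ q * x n + A * θ ^ n + B) (n : ℕ) :
    x n ≤ q ^ n * x 0 + A * θ ^ n / (θ - q) + B / (1 - q) := by
  have hθq : 0 < θ - q := sub_pos.2 hqθ
  have h1q : 0 < 1 - q := sub_pos.2 hq1
  induction n with
  | zero =>
    have : 0 ≤ A * θ ^ 0 / (θ - q) + B / (1 - q) := by positivity
    simp only [pow_zero, one_mul] at this ⊢
    linarith
  | succ n ih =>
    calc x (n + 1) ≤ q * x n + A * θ ^ n + B := hx n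
      _ ≤ q * (q ^ n * x 0 + A * θ ^ n / (θ - q) + B / (1 - q)) + A * θ ^ n + B := by gcongr
      _ = q ^ (n + 1) * x 0 + A * θ ^ (n + 1) / (θ - q) + B / (1 - q) := by
        field_simp
        ring

theorem le_div_sub_mul_of_le_add_mul {x P κ τ η : ℝ} (hκ : 0 ≤ κ) (hκτ : κ < τ)
    (hx : x ≤ P + κ * η) (hη : τ * η ≤ x) : x ≤ τ / (τ - κ) * P := by
  have hτ : 0 < τ := hκ.trans_lt hκτ
  rw [div_mul_eq_mul_div, le_div_iff₀ (sub_pos.2 hκτ)]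
  linear_combination τ * hx + κ * hη

namespace NewtonApriori

variable {J R : ℕ → ℝ} {Rdag η α₀ a b c θ τ : ℝ}

theorem J_le (hR : ∀ k, 0 ≤ R k) (hRdag : 0 ≤ Rdag) (hη : 0 ≤ η) (hα₀ : 0 ≤ α₀)
    (hb : 0 ≤ b) (hab : b < a) (hc : 0 ≤ c) (hθ : b / a < θ)
    (hrec : ∀ k : ℕ,
      J (k + 1) + (α₀ / a) * θ ^ k * R (k + 1) ≤
        (b / a) * J k + (α₀ / a) * θ ^ k * Rdag + (c / a) * η)
    (k : ℕ) :
    J k ≤ θ ^ k * ((b / (a * θ)) ^ k * J 0 + α₀ / (a * θ - b) * Rdag) + c / (a - b) * η := by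
  have ha : 0 < a := hb.trans_lt hab
  have hθ0 : 0 < θ := (div_nonneg hb ha.le).trans_lt hθ
  have haθ : 0 < a * θ - b := by rw [div_lt_iff₀ ha] at hθ; linarith
  have hstep n : J (n + 1) ≤ b / a * J n + α₀ / a * Rdag * θ ^ n + c / a * η := by
    have : 0 ≤ α₀ / a * θ ^ n * R (n + 1) := by have := hR (n + 1); positivity
    linarith [hrec n]
  convert le_geom_of_le_mul_add (by positivity) hθ ((div_lt_one ha).2 hab) (by positivity)
    (by positivity) hstep k using 1
  simp only [div_pow, mul_pow]
  field_simp

theorem J_le_of_discrepancy (hR : ∀ k, 0 ≤ R k) (hRdag : 0 ≤ Rdag) (hη : 0 ≤ η)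
    (hα₀ : 0 ≤ α₀) (hb : 0 ≤ b) (hab : b < a) (hc : 0 ≤ c) (hθ : b / a < θ)
    (hτ : c / (a - b) < τ)
    (hrec : ∀ k : ℕ,
      J (k + 1) + (α₀ / a) * θ ^ k * R (k + 1) ≤
        (b / a) * J k + (α₀ / a) * θ ^ k * Rdag + (c / a) * η)
    {k : ℕ} (hdisc : τ * η ≤ J k) :
    J k ≤ τ * (a - b) / (τ * (a - b) - c) *
      (θ ^ k * ((b / (a * θ)) ^ k * J 0 + α₀ / (a * θ - b) * Rdag)) := by
  have hba : 0 < a - b := sub_pos.2 hab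
  convert le_div_sub_mul_of_le_add_mul (div_nonneg hc hba.le) hτ
    (J_le hR hRdag hη hα₀ hb hab hc hθ hrec k) hdisc using 2
  field_simp

theorem mul_R_sub_le (hJ : ∀ k, 0 ≤ J k) (ha : 0 < a) (hc : 0 ≤ c) (hτ : 0 < τ)
    (hrec : ∀ k : ℕ,
      J (k + 1) + (α₀ / a) * θ ^ k * R (k + 1) ≤
        (b / a) * J k + (α₀ / a) * θ ^ k * Rdag + (c / a) * η)
    {k : ℕ} (hdisc : τ * η ≤ J k) :
    α₀ * θ ^ k * (R (k + 1) - Rdag) ≤ (b + c / τ) * J k := by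
  have hnoise : c * η ≤ c / τ * J k := by
    rw [div_mul_eq_mul_div, le_div_iff₀ hτ]
    linear_combination c * hdisc
  have hrec_k := hrec k
  field_simp at hrec_k
  linear_combination hrec_k + a * hJ (k + 1) + hnoise

theorem R_le (hJ : ∀ k, 0 ≤ J k) (hR : ∀ k, 0 ≤ R k) (hRdag : 0 ≤ Rdag) (hη : 0 ≤ η)
    (hα₀ : 0 < α₀) (hb : 0 ≤ b) (hab : b < a) (hc : 0 ≤ c) (hθ : b / a < θ)
    (hτ : c / (a - b) < τ)
    (hrec : ∀ k : ℕ,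
      J (k + 1) + (α₀ / a) * θ ^ k * R (k + 1) ≤
        (b / a) * J k + (α₀ / a) * θ ^ k * Rdag + (c / a) * η)
    {k : ℕ} (hdisc : τ * η ≤ J k) :
    R (k + 1) ≤ Rdag + ((a - b) / (τ * (a - b) - c)) * ((τ * b + c) / α₀) *
      ((b / (a * θ)) ^ k * J 0 + (α₀ / (a * θ - b)) * Rdag) := by
  have ha : 0 < a := hb.trans_lt hab
  have hba : 0 < a - b := sub_pos.2 hab
  have hτ0 : 0 < τ := (div_nonneg hc hba.le).trans_lt hτ
  have hτc : 0 < τ * (a - b) - c := by rw [div_lt_iff₀ hba] at hτ; linarith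
  have hθk : 0 < θ ^ k := pow_pos ((div_nonneg hb ha.le).trans_lt hθ) k
  set Q := (b / (a * θ)) ^ k * J 0 + α₀ / (a * θ - b) * Rdag
  have key : α₀ * θ ^ k * (R (k + 1) - Rdag) ≤
      α₀ * θ ^ k * ((a - b) / (τ * (a - b) - c) * ((τ * b + c) / α₀) * Q) :=
    calc α₀ * θ ^ k * (R (k + 1) - Rdag) ≤ (b + c / τ) * J k :=
          mul_R_sub_le hJ ha hc hτ0 hrec hdisc
      _ ≤ (b + c / τ) * (τ * (a - b) / (τ * (a - b) - c) * (θ ^ k * Q)) := by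
          gcongr
          exact J_le_of_discrepancy hR hRdag hη hα₀.le hb hab hc hθ hτ hrec hdisc
      _ = _ := by field_simp
  linarith [le_of_mul_le_mul_left key (by positivity)]

theorem R_le_uniform (hJ : ∀ k, 0 ≤ J k) (hR : ∀ k, 0 ≤ R k) (hRdag : 0 ≤ Rdag)
    (hη : 0 ≤ η) (hα₀ : 0 < α₀) (hb : 0 ≤ b) (hab : b < a) (hc : 0 ≤ c) (hθ : b / a < θ)
    (hτ : c / (a - b) < τ)
    (hrec : ∀ k : ℕ,
      J (k + 1) + (α₀ / a) * θ ^ k * R (k + 1) ≤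
        (b / a) * J k + (α₀ / a) * θ ^ k * Rdag + (c / a) * η)
    {k : ℕ} (hdisc : τ * η ≤ J k) :
    R (k + 1) ≤ (1 + ((a - b) / (τ * (a - b) - c)) * ((τ * b + c) / (a * θ - b))) * Rdag +
      ((a - b) / (τ * (a - b) - c)) * ((τ * b + c) / α₀) * J 0 := by
  have ha : 0 < a := hb.trans_lt hab
  have hba : 0 < a - b := sub_pos.2 hab
  have hθ0 : 0 < θ := (div_nonneg hb ha.le).trans_lt hθ
  have haθ : 0 < a * θ - b := by rw [div_lt_iff₀ ha] at hθ; linarith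
  have hτ0 : 0 < τ := (div_nonneg hc hba.le).trans_lt hτ
  have hτc : 0 < τ * (a - b) - c := by rw [div_lt_iff₀ hba] at hτ; linarith
  have hratio : (b / (a * θ)) ^ k ≤ 1 :=
    pow_le_one₀ (by positivity) ((div_le_one (by positivity)).2 (by linarith))
  calc R (k + 1)
      ≤ Rdag + ((a - b) / (τ * (a - b) - c)) * ((τ * b + c) / α₀) *
          ((b / (a * θ)) ^ k * J 0 + (α₀ / (a * θ - b)) * Rdag) :=
        R_le hJ hR hRdag hη hα₀ hb hab hc hθ hτ hrec hdisc
    _ ≤ Rdag + ((a - b) / (τ * (a - b) - c)) * ((τ * b + c) / α₀) *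
          (J 0 + (α₀ / (a * θ - b)) * Rdag) := by
        gcongr
        exact mul_le_of_le_one_left (hJ 0) hratio
    _ = _ := by field_simp; ring

end NewtonApriori

theorem newton_apriori_regularization_bound_general
    (J R : ℕ → ℝ) (hJ : ∀ k, 0 ≤ J k) (hR : ∀ k, 0 ≤ R k)
    (Rdag η α₀ a b c θ τ : ℝ)
    (hRdag : 0 ≤ Rdag) (hη : 0 ≤ η) (hα₀ : 0 < α₀)
    (hb : 0 ≤ b) (hab : b < a) (hc : 0 ≤ c)
    (hθ1 : b / a < θ) (hτ : c / (a - b) < τ)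
    (hrec : ∀ k : ℕ,
      J (k + 1) + (α₀ / a) * θ ^ k * R (k + 1) ≤
        (b / a) * J k + (α₀ / a) * θ ^ k * Rdag + (c / a) * η)
    (k : ℕ) (hdisc : τ * η ≤ J k) :
    R (k + 1) ≤ Rdag + ((a - b) / (τ * (a - b) - c)) * ((τ * b + c) / α₀) *
        ((b / (a * θ)) ^ k * J 0 + (α₀ / (a * θ - b)) * Rdag) ∧
      R (k + 1) ≤
        (1 + ((a - b) / (τ * (a - b) - c)) * ((τ * b + c) / (a * θ - b))) * Rdag +
          ((a - b) / (τ * (a - b) - c)) * ((τ * b + c) / α₀) * J 0 := by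
  exact ⟨NewtonApriori.R_le hJ hR hRdag hη hα₀ hb hab hc hθ1 hτ hrec hdisc,
    NewtonApriori.R_le_uniform hJ hR hRdag hη hα₀ hb hab hc hθ1 hτ hrec hdisc⟩

/-- Uniform bound on the regularization functional in the a priori regularized
Newton method: before the discrepancy principle is triggered (`τη ≤ J_k`), the
recursion yields
`R_{k+1} ≤ R† + ((a-b)/(τ(a-b)-c))((τb+c)/α₀)((b/(aθ))^k J_0 + (α₀/(aθ-b)) R†)`,
and in particular
`R_{k+1} ≤ (1 + ((a-b)/(τ(a-b)-c))((τb+c)/(aθ-b))) R† + ((a-b)/(τ(a-b)-c))((τb+c)/α₀) J_0`. -/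
theorem newton_apriori_regularization_bound
    (J R : ℕ → ℝ) (hJ : ∀ k, 0 ≤ J k) (hR : ∀ k, 0 ≤ R k)
    (Rdag η α₀ a b c θ τ : ℝ)
    (hRdag : 0 ≤ Rdag) (hη : 0 ≤ η) (hα₀ : 0 < α₀)
    (hb : 0 ≤ b) (hab : b < a) (hc : 0 ≤ c)
    (hθ1 : b / a < θ) (hθ2 : θ < 1) (hτ : c / (a - b) < τ)
    (hrec : ∀ k : ℕ,
      J (k + 1) + (α₀ / a) * θ ^ k * R (k + 1) ≤
        (b / a) * J k + (α₀ / a) * θ ^ k * Rdag + (c / a) * η)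
    (k : ℕ) (hdisc : τ * η ≤ J k) :
    R (k + 1) ≤ Rdag + ((a - b) / (τ * (a - b) - c)) * ((τ * b + c) / α₀) *
        ((b / (a * θ)) ^ k * J 0 + (α₀ / (a * θ - b)) * Rdag) ∧
      R (k + 1) ≤
        (1 + ((a - b) / (τ * (a - b) - c)) * ((τ * b + c) / (a * θ - b))) * Rdag +
          ((a - b) / (τ * (a - b) - c)) * ((τ * b + c) / α₀) * J 0 :=
  newton_apriori_regularization_bound_general J R hJ hR Rdag η α₀ a b c θ τ hRdag hη hα₀ hb hab hc
    hθ1 hτ hrec k hdisc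
end

section
/- (Geometric decay in the a posteriori regularized Newton method) Let X be a real Banach space, M̃ ⊆ X, J : X → ℝ with J ≥ 0 on M̃, G(x_k) : X → ℝ linear and H(x_k) : X × X → ℝ bilinear, and let a̲ > 0, b̲ ≥ 0, σ̄ ∈ ℝ. Assume the lower nonlinearity bound a̲ J(x₊) − b̲ J(x) ≤ G(x)(x₊ − x) + (1/2)H(x)(x₊ − x, x₊ − x) for all x, x₊ ∈ M̃. If x_k, x_{k+1} ∈ M̃ satisfy J(x_k) + G(x_k)(x_{k+1} − x_k) + (1/2)H(x_k)(x_{k+1} − x_k, x_{k+1} − x_k) ≤ σ̄ J(x_k), then J(x_{k+1}) ≤ ((σ̄ − 1 + b̲)/a̲) J(x_k). -/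
theorem newton_aposteriori_geometric_decay_general
    {X : Type*} [NormedAddCommGroup X] [NormedSpace ℝ X]
    (Mt : Set X) (J : X → ℝ)
    (G : X → X →L[ℝ] ℝ) (H : X → X →L[ℝ] X →L[ℝ] ℝ)
    (alo blo σhi : ℝ) (halo : 0 < alo)
    (hlow : ∀ x ∈ Mt, ∀ xp ∈ Mt,
      alo * J xp - blo * J x ≤
        G x (xp - x) + (1 / 2) * H x (xp - x) (xp - x))
    (xk : X) (hxk : xk ∈ Mt) (x1 : X) (hx1 : x1 ∈ Mt)
    (hstep : J xk + G xk (x1 - xk) + (1 / 2) * H xk (x1 - xk) (x1 - xk) ≤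
      σhi * J xk) :
    J x1 ≤ ((σhi - 1 + blo) / alo) * J xk := by
  have hdecay : alo * J x1 ≤ (σhi - 1 + blo) * J xk := by
    linarith [hlow xk hxk x1 hx1]
  rw [div_mul_eq_mul_div, le_div_iff₀ halo]
  linarith

/-- Geometric decay of the cost in the a posteriori regularized Newton method:
under the lower nonlinearity bound
`a̲ J(xp) - b̲ J(x) ≤ G(x)(xp - x) + ½H(x)(xp - x)²` on `M̃`, the inexact Newton
condition `J(x_k) + G(x_k)(x_{k+1} - x_k) + ½H(x_k)(x_{k+1} - x_k)² ≤ σ̄ J(x_k)`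
implies `J(x_{k+1}) ≤ ((σ̄ - 1 + b̲)/a̲) J(x_k)`. -/
theorem newton_aposteriori_geometric_decay
    {X : Type*} [NormedAddCommGroup X] [NormedSpace ℝ X]
    (Mt : Set X) (J : X → ℝ) (hJnonneg : ∀ x ∈ Mt, 0 ≤ J x)
    (G : X → X →L[ℝ] ℝ) (H : X → X →L[ℝ] X →L[ℝ] ℝ)
    (alo blo σhi : ℝ) (halo : 0 < alo) (hblo : 0 ≤ blo)
    (hlow : ∀ x ∈ Mt, ∀ xp ∈ Mt,
      alo * J xp - blo * J x ≤
        G x (xp - x) + (1 / 2) * H x (xp - x) (xp - x))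
    (xk : X) (hxk : xk ∈ Mt) (x1 : X) (hx1 : x1 ∈ Mt)
    (hstep : J xk + G xk (x1 - xk) + (1 / 2) * H xk (x1 - xk) (x1 - xk) ≤
      σhi * J xk) :
    J x1 ≤ ((σhi - 1 + blo) / alo) * J xk :=
  newton_aposteriori_geometric_decay_general Mt J G H alo blo σhi halo hlow xk hxk x1 hx1 hstep
end

section
/- (Tangential cone estimate for the all-at-once groundwater filtration problem) Let (Ω, μ) be a measure space, let σ̲ ≤ σ̄ be real numbers, and let σ, σ₊ : Ω → ℝ be measurable functions with σ̲ ≤ σ(ω) ≤ σ̄ and σ̲ ≤ σ₊(ω) ≤ σ̄ for μ-a.e. ω. Let E, E₊, J, J₊, g : Ω → ℝ² be square-integrable (L²) vector fields. Then |∫_Ω (σ₊ − σ)⟨E₊ − E, σE − J⟩ dμ| ≤ (σ̄ − σ̲) ‖E₊ − E‖_{L²} ‖σE − J‖_{L²} ≤ (σ̄ − σ̲) · (‖(σ₊E₊ − J₊) − (σE − J)‖_{L²}² + ‖E₊ − E‖_{L²}²)^{1/2} · (‖σE − J‖_{L²}² + ‖E − g‖_{L²}²)^{1/2}. -/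
/-!
Pointwise, `|σ₊ - σ| ≤ σ̄ - σ̲` and `|⟪E₊ - E, σE - J⟫| ≤ |E₊ - E| |σE - J|`, so the first
inequality is Cauchy–Schwarz in `L²(μ)` for the scalar functions `|E₊ - E|` and `|σE - J|`;
here `σE - J ∈ L²` because `σ` is essentially bounded. The second inequality only enlarges
each factor by a nonnegative summand under the square root.
-/

open MeasureTheory RealInnerProductSpace

section

variable {Ω : Type*} [MeasurableSpace Ω] {μ : Measure Ω}

theorem memLp_top_of_ae_mem_Icc {f : Ω → ℝ} {a b : ℝ} (hf : AEStronglyMeasurable f μ)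
    (h : ∀ᵐ ω ∂μ, f ω ∈ Set.Icc a b) : MemLp f ⊤ μ :=
  memLp_top_of_bound hf (max |a| |b|) (h.mono fun _ hω ↦ abs_le_max_abs_abs hω.1 hω.2)

theorem integral_norm_mul_norm_le_sqrt_mul_sqrt {E : Type*} [NormedAddCommGroup E]
    {u v : Ω → E} (hu : MemLp u 2 μ) (hv : MemLp v 2 μ) :
    ∫ ω, ‖u ω‖ * ‖v ω‖ ∂μ ≤ √(∫ ω, ‖u ω‖ ^ 2 ∂μ) * √(∫ ω, ‖v ω‖ ^ 2 ∂μ) := by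
  have h := integral_mul_norm_le_Lp_mul_Lq (μ := μ) Real.HolderConjugate.two_two
    (by simpa using hu) (by simpa using hv)
  simpa only [Real.sqrt_eq_rpow, Real.rpow_two] using h

theorem abs_integral_mul_inner_le {E : Type*} [NormedAddCommGroup E] [InnerProductSpace ℝ E]
    {c : Ω → ℝ} {C : ℝ} (hC : 0 ≤ C) (hc : ∀ᵐ ω ∂μ, |c ω| ≤ C)
    {u v : Ω → E} (hu : MemLp u 2 μ) (hv : MemLp v 2 μ) :
    |∫ ω, c ω * ⟪u ω, v ω⟫ ∂μ| ≤ C * √(∫ ω, ‖u ω‖ ^ 2 ∂μ) * √(∫ ω, ‖v ω‖ ^ 2 ∂μ) := by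
  have hpointwise : ∀ᵐ ω ∂μ, |c ω * ⟪u ω, v ω⟫| ≤ C * (‖u ω‖ * ‖v ω‖) := by
    filter_upwards [hc] with ω hω
    rw [abs_mul]
    exact mul_le_mul hω (abs_real_inner_le_norm _ _) (abs_nonneg _) hC
  have hint : Integrable (fun ω ↦ ‖u ω‖ * ‖v ω‖) μ := hu.norm.integrable_mul hv.norm
  calc |∫ ω, c ω * ⟪u ω, v ω⟫ ∂μ|
      ≤ ∫ ω, |c ω * ⟪u ω, v ω⟫| ∂μ := abs_integral_le_integral_abs
    _ ≤ ∫ ω, C * (‖u ω‖ * ‖v ω‖) ∂μ :=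
        integral_mono_of_nonneg (ae_of_all _ fun _ ↦ abs_nonneg _) (hint.const_mul C) hpointwise
    _ = C * ∫ ω, ‖u ω‖ * ‖v ω‖ ∂μ := integral_const_mul C _
    _ ≤ C * √(∫ ω, ‖u ω‖ ^ 2 ∂μ) * √(∫ ω, ‖v ω‖ ^ 2 ∂μ) := by
        rw [mul_assoc]
        exact mul_le_mul_of_nonneg_left (integral_norm_mul_norm_le_sqrt_mul_sqrt hu hv) hC

end

theorem groundwater_tangential_cone_estimate_general
    {Ω : Type*} [MeasurableSpace Ω] (μ : Measure Ω)
    (σlo σhi : ℝ) (hσ : σlo ≤ σhi)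
    (σ σp : Ω → ℝ) (hσm : Measurable σ)
    (hσbd : ∀ᵐ ω ∂μ, σlo ≤ σ ω ∧ σ ω ≤ σhi)
    (hσpbd : ∀ᵐ ω ∂μ, σlo ≤ σp ω ∧ σp ω ≤ σhi)
    (E Ep Jf Jp g : Ω → EuclideanSpace ℝ (Fin 2))
    (hE : MemLp E 2 μ) (hEp : MemLp Ep 2 μ) (hJf : MemLp Jf 2 μ) :
    |∫ ω, (σp ω - σ ω) * ⟪Ep ω - E ω, σ ω • E ω - Jf ω⟫ ∂μ| ≤
        (σhi - σlo) * Real.sqrt (∫ ω, ‖Ep ω - E ω‖ ^ 2 ∂μ) *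
          Real.sqrt (∫ ω, ‖σ ω • E ω - Jf ω‖ ^ 2 ∂μ) ∧
      (σhi - σlo) * Real.sqrt (∫ ω, ‖Ep ω - E ω‖ ^ 2 ∂μ) *
          Real.sqrt (∫ ω, ‖σ ω • E ω - Jf ω‖ ^ 2 ∂μ) ≤
        (σhi - σlo) *
          Real.sqrt ((∫ ω, ‖(σp ω • Ep ω - Jp ω) - (σ ω • E ω - Jf ω)‖ ^ 2 ∂μ) +
            (∫ ω, ‖Ep ω - E ω‖ ^ 2 ∂μ)) *
          Real.sqrt ((∫ ω, ‖σ ω • E ω - Jf ω‖ ^ 2 ∂μ) +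
            (∫ ω, ‖E ω - g ω‖ ^ 2 ∂μ)) := by
  have hσE : MemLp (fun ω ↦ σ ω • E ω) 2 μ :=
    hE.smul (memLp_top_of_ae_mem_Icc hσm.aestronglyMeasurable hσbd)
  have hcoeff : ∀ᵐ ω ∂μ, |σp ω - σ ω| ≤ σhi - σlo := by
    filter_upwards [hσbd, hσpbd] with ω hω hpω
    exact abs_sub_le_of_le_of_le hpω.1 hpω.2 hω.1 hω.2
  refine ⟨abs_integral_mul_inner_le (sub_nonneg.mpr hσ) hcoeff (hEp.sub hE) (hσE.sub hJf), ?_⟩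
  have hflux : 0 ≤ ∫ ω, ‖(σp ω • Ep ω - Jp ω) - (σ ω • E ω - Jf ω)‖ ^ 2 ∂μ :=
    integral_nonneg fun _ ↦ by positivity
  have hdata : 0 ≤ ∫ ω, ‖E ω - g ω‖ ^ 2 ∂μ := integral_nonneg fun _ ↦ by positivity
  gcongr
  · exact le_add_of_nonneg_left hflux
  · exact le_add_of_nonneg_right hdata

/-- Tangential cone estimate for the all-at-once groundwater filtration
problem: for bounded coefficients `σ̲ ≤ σ, σ₊ ≤ σ̄` and square integrable
vector fields `E, E₊, J, J₊, g`,
`|∫ (σ₊ - σ)⟪E₊ - E, σE - J⟫| ≤ (σ̄ - σ̲) ‖E₊ - E‖ ‖σE - J‖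
  ≤ (σ̄ - σ̲) √(‖(σ₊E₊ - J₊) - (σE - J)‖² + ‖E₊ - E‖²) √(‖σE - J‖² + ‖E - g‖²)`,
where `‖f‖ = (∫ |f|²)^{1/2}` is the `L²(μ)` norm. -/
theorem groundwater_tangential_cone_estimate
    {Ω : Type*} [MeasurableSpace Ω] (μ : Measure Ω)
    (σlo σhi : ℝ) (hσ : σlo ≤ σhi)
    (σ σp : Ω → ℝ) (hσm : Measurable σ) (hσpm : Measurable σp)
    (hσbd : ∀ᵐ ω ∂μ, σlo ≤ σ ω ∧ σ ω ≤ σhi)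
    (hσpbd : ∀ᵐ ω ∂μ, σlo ≤ σp ω ∧ σp ω ≤ σhi)
    (E Ep Jf Jp g : Ω → EuclideanSpace ℝ (Fin 2))
    (hE : MemLp E 2 μ) (hEp : MemLp Ep 2 μ) (hJf : MemLp Jf 2 μ)
    (hJp : MemLp Jp 2 μ) (hg : MemLp g 2 μ) :
    |∫ ω, (σp ω - σ ω) * ⟪Ep ω - E ω, σ ω • E ω - Jf ω⟫ ∂μ| ≤
        (σhi - σlo) * Real.sqrt (∫ ω, ‖Ep ω - E ω‖ ^ 2 ∂μ) *
          Real.sqrt (∫ ω, ‖σ ω • E ω - Jf ω‖ ^ 2 ∂μ) ∧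
      (σhi - σlo) * Real.sqrt (∫ ω, ‖Ep ω - E ω‖ ^ 2 ∂μ) *
          Real.sqrt (∫ ω, ‖σ ω • E ω - Jf ω‖ ^ 2 ∂μ) ≤
        (σhi - σlo) *
          Real.sqrt ((∫ ω, ‖(σp ω • Ep ω - Jp ω) - (σ ω • E ω - Jf ω)‖ ^ 2 ∂μ) +
            (∫ ω, ‖Ep ω - E ω‖ ^ 2 ∂μ)) *
          Real.sqrt ((∫ ω, ‖σ ω • E ω - Jf ω‖ ^ 2 ∂μ) +
            (∫ ω, ‖E ω - g ω‖ ^ 2 ∂μ)) :=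
  groundwater_tangential_cone_estimate_general μ σlo σhi hσ σ σp hσm hσbd hσpbd E Ep Jf Jp g hE hEp
    hJf
end
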